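/- Let X₁, ..., X_{m+n} be random variables with X_i ~ N(μ_i, σ_i²), and suppose the random vector (X₁, ..., X_{m+n}) is distributed as (F_{X₁}^{-1}(U), ..., F_{X_m}^{-1}(U), F_{X_{m+1}}^{-1}(1−U), ..., F_{X_{m+n}}^{-1}(1−U)) for a single random variable U uniformly distributed on [0,1]. Let S = Σ_{i=1}^{m+n} X_i and let g be any distortion function with dual ḡ. If Σ_{i=1}^{m} σ_i ≥ Σ_{i=m+1}^{m+n} σ_i, then ρ_g[S] = Σ_{i=1}^{m} ρ_g[X_i] + Σ_{i=m+1}^{m+n} ρ_{ḡ}[X_i]; if Σ_{i=1}^{m} σ_i < Σ_{i=m+1}^{m+n} σ_i, then ρ_g[S] = Σ_{i=1}^{m} ρ_{ḡ}[X_i] + Σ_{i=m+1}^{m+n} ρ_g[X_i]. -/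

import Mathlib

open MeasureTheory ProbabilityTheory Set

noncomputable section

variable {Ω : Type*} [MeasurableSpace Ω]

/-- The cumulative distribution function of the random variable `X` under `P`. -/
def rvCdf (P : Measure Ω) (X : Ω → ℝ) : ℝ → ℝ := fun x => (P {ω | X ω ≤ x}).toReal

/-- The survival function `x ↦ P(X > x)`. -/
def rvSurv (P : Measure Ω) (X : Ω → ℝ) : ℝ → ℝ := fun x => (P {ω | x < X ω}).toReal

/-- The left inverse `F⁻¹(p) = inf {x | F x ≥ p}` of a cdf `F`. -/
def leftInv (F : ℝ → ℝ) (p : ℝ) : ℝ := sInf {x | p ≤ F x}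

/-- The right inverse `F⁻¹⁺(p) = sup {x | F x ≤ p}` of a cdf `F`. -/
def rightInv (F : ℝ → ℝ) (p : ℝ) : ℝ := sSup {x | F x ≤ p}

/-- `g : [0,1] → [0,1]` is a distortion function: nondecreasing with `g 0 = 0`, `g 1 = 1`. -/
def IsDistortion (g : ℝ → ℝ) : Prop :=
  MonotoneOn g (Icc 0 1) ∧ g 0 = 0 ∧ g 1 = 1 ∧ ∀ q ∈ Icc (0:ℝ) 1, g q ∈ Icc (0:ℝ) 1

/-- The dual distortion function `ḡ(q) = 1 - g(1 - q)`. -/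
def dualDistortion (g : ℝ → ℝ) : ℝ → ℝ := fun q => 1 - g (1 - q)

/-- The distortion risk measure
`ρ_g[X] = -∫_{-∞}^0 (1 - g(P(X > x))) dx + ∫_0^∞ g(P(X > x)) dx`. -/
def rho (P : Measure Ω) (g : ℝ → ℝ) (X : Ω → ℝ) : ℝ :=
  (- ∫ x in Iio (0:ℝ), (1 - g (rvSurv P X x))) + ∫ x in Ioi (0:ℝ), g (rvSurv P X x)

/-- The two integrals defining the distortion risk measure `ρ_g[X]` are finite. -/
def RhoFinite (P : Measure Ω) (g : ℝ → ℝ) (X : Ω → ℝ) : Prop :=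
  IntegrableOn (fun x => 1 - g (rvSurv P X x)) (Iio (0:ℝ)) volume ∧
  IntegrableOn (fun x => g (rvSurv P X x)) (Ioi (0:ℝ)) volume

/-- `U` is uniformly distributed on `[0,1]`. -/
def IsUniform01 (P : Measure Ω) (U : Ω → ℝ) : Prop :=
  Measurable U ∧ Measure.map U P = volume.restrict (Icc (0:ℝ) 1)

/-- The counter-monotonic sum `S⁻ = F_{X₁}⁻¹(U) + F_{X₂}⁻¹(1 - U)`. -/
def cmSum (P : Measure Ω) (X₁ X₂ : Ω → ℝ) (U : Ω → ℝ) : Ω → ℝ :=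
  fun ω => leftInv (rvCdf P X₁) (U ω) + leftInv (rvCdf P X₂) (1 - U ω)

/-- `X` is symmetric: for some `m`, `P(X ≤ m - x) = P(X ≥ m + x)` for all `x`. -/
def IsSymmetricRV (P : Measure Ω) (X : Ω → ℝ) : Prop :=
  ∃ m : ℝ, ∀ x : ℝ, P {ω | X ω ≤ m - x} = P {ω | m + x ≤ X ω}

/-- Dispersive order `X ≤_disp Y`. -/
def DispLE (P : Measure Ω) (X Y : Ω → ℝ) : Prop :=
  ∀ u v : ℝ, 0 < v → v ≤ u → u < 1 →
    leftInv (rvCdf P X) u - leftInv (rvCdf P X) v ≤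
      leftInv (rvCdf P Y) u - leftInv (rvCdf P Y) v

/-- The cdf of `X` is continuous and strictly increasing on `(F⁻¹⁺(0), F⁻¹(1))`. -/
def CdfRegular (P : Measure Ω) (X : Ω → ℝ) : Prop :=
  ContinuousOn (rvCdf P X) (Ioo (rightInv (rvCdf P X) 0) (leftInv (rvCdf P X) 1)) ∧
  StrictMonoOn (rvCdf P X) (Ioo (rightInv (rvCdf P X) 0) (leftInv (rvCdf P X) 1))

/-- Value-at-Risk `VaR_p[X] = F_X⁻¹(p)`. -/
def VaR (P : Measure Ω) (X : Ω → ℝ) (p : ℝ) : ℝ := leftInv (rvCdf P X) p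

/-- Tail-Value-at-Risk `TVaR_p[X] = (1/(1-p)) ∫_p^1 F_X⁻¹(q) dq`. -/
def TVaR (P : Measure Ω) (X : Ω → ℝ) (p : ℝ) : ℝ :=
  (1 - p)⁻¹ * ∫ q in p..1, leftInv (rvCdf P X) q

/-- Left-Tail-Value-at-Risk `LTVaR_p[X] = (1/p) ∫_0^p F_X⁻¹(q) dq`. -/
def LTVaR (P : Measure Ω) (X : Ω → ℝ) (p : ℝ) : ℝ :=
  p⁻¹ * ∫ q in (0:ℝ)..p, leftInv (rvCdf P X) q

/-- The standard normal cdf `Φ`. -/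
def stdNormCdf : ℝ → ℝ := fun x => ((gaussianReal 0 1) (Iic x)).toReal

/-- The inverse `Φ⁻¹` of the standard normal cdf. -/
def stdNormInv : ℝ → ℝ := fun p => sInf {x | p ≤ stdNormCdf x}

/-- The Wang transform distortion function at level `p`. -/
def wangG (p : ℝ) : ℝ → ℝ := fun q => stdNormCdf (stdNormInv q + stdNormInv p)

/-- The Wang transform risk measure at level `p`. -/
def WT (P : Measure Ω) (X : Ω → ℝ) (p : ℝ) : ℝ := rho P (wangG p) X

/-- `X ~ N(μ, σ²)`. -/
def IsNormalRV (P : Measure Ω) (X : Ω → ℝ) (μ σ : ℝ) : Prop :=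
  Measurable X ∧ Measure.map X P = gaussianReal μ (⟨σ ^ 2, sq_nonneg σ⟩ : NNReal)

/-- `X ~ LN(μ, σ²)`, i.e. `X` is distributed as `exp Z` with `Z ~ N(μ, σ²)`. -/
def IsLogNormalRV (P : Measure Ω) (X : Ω → ℝ) (μ σ : ℝ) : Prop :=
  Measurable X ∧
    Measure.map X P = Measure.map Real.exp (gaussianReal μ (⟨σ ^ 2, sq_nonneg σ⟩ : NNReal))

/-- `X ~ Student(ν)`: density proportional to `(1 + x²/ν)^(-(ν+1)/2)`. -/
def IsStudentRV (P : Measure Ω) (X : Ω → ℝ) (ν : ℝ) : Prop :=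
  Measurable X ∧ ∃ c : ℝ, 0 < c ∧
    Measure.map X P =
      volume.withDensity (fun x => ENNReal.ofReal (c * (1 + x ^ 2 / ν) ^ (-((ν + 1) / 2))))

/-- Extension of a distortion function to `ℝ` by constants. -/
def gExt (g : ℝ → ℝ) : ℝ → ℝ := fun q => if q ≤ 0 then 0 else if 1 ≤ q then 1 else g q

open Classical in
/-- The Lebesgue–Stieltjes measure `dg` associated with (the right-continuous modification of)
the extension of a distortion function `g` to `ℝ`. -/
def lsMeasure (g : ℝ → ℝ) : Measure ℝ :=
  if h : Monotone (gExt g) then h.stieltjesFunction.measure else 0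

/-!
Under the quantile coupling every `Xᵢ` equals `μᵢ + σᵢ Φ⁻¹(U)` on the first block and, since
`Φ⁻¹(1 - u) = -Φ⁻¹(u)`, `μᵢ - σᵢ Φ⁻¹(U)` on the second. Hence
`S = ∑ μᵢ + (∑_{i ≤ m} σᵢ - ∑_{i > m} σᵢ) Φ⁻¹(U)` is normal with standard deviation
`|∑_{i ≤ m} σᵢ - ∑_{i > m} σᵢ|`. A distortion risk measure is translation equivariant and
positively homogeneous, so `ρ_g[N(μ, s²)] = μ + |s| ρ_g[Z]` for `Z` standard normal, and the
symmetry of `Z` gives `ρ_ḡ[Z] = -ρ_g[Z]`. Both identities are then linear algebra in `μᵢ`, `σᵢ` and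
`ρ_g[Z]`.
-/

section ChoquetIntegral

/-- `ρ` as a single integral over `ℝ` (see `neg_setIntegral_Iio_add_setIntegral_Ioi`), on which
translations and dilations act by a change of variables. -/
def choquetIntegral (h : ℝ → ℝ) : ℝ := ∫ x, (h x - (Iio (0 : ℝ)).indicator 1 x)

lemma indicator_Iio_sub_indicator_Iio {a b : ℝ} (hba : b ≤ a) :
    (fun x => (Iio a).indicator (1 : ℝ → ℝ) x - (Iio b).indicator 1 x) = (Ico b a).indicator 1 := by
  ext x
  simp only [indicator_apply, mem_Iio, mem_Ico, Pi.one_apply]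
  split_ifs <;> grind

lemma integrable_indicator_Iio_sub_indicator_Iio (a b : ℝ) :
    Integrable (fun x => (Iio a).indicator (1 : ℝ → ℝ) x - (Iio b).indicator 1 x) := by
  wlog hba : b ≤ a generalizing a b
  · simpa only [Pi.neg_def, neg_sub] using (this b a (le_of_not_ge hba)).neg
  rw [indicator_Iio_sub_indicator_Iio hba]
  exact (integrableOn_const (by simp)).integrable_indicator measurableSet_Ico

lemma integral_indicator_Iio_sub_indicator_Iio (a b : ℝ) :
    ∫ x, ((Iio a).indicator (1 : ℝ → ℝ) x - (Iio b).indicator 1 x) = a - b := by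
  wlog hba : b ≤ a generalizing a b
  · rw [← neg_sub b a, ← this b a (le_of_not_ge hba), ← integral_neg]
    simp only [neg_sub]
  rw [indicator_Iio_sub_indicator_Iio hba, integral_indicator_one measurableSet_Ico]
  simp [hba]

lemma integrable_sub_indicator_Iio_zero {h : ℝ → ℝ} (h₁ : IntegrableOn (fun x => 1 - h x) (Iio 0))
    (h₂ : IntegrableOn h (Ioi 0)) :
    Integrable (fun x => h x - (Iio (0 : ℝ)).indicator 1 x) := by
  rw [← integrableOn_univ, ← Iio_union_Ici]
  refine IntegrableOn.union ?_ ?_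
  · refine h₁.neg.congr_fun (fun x hx => ?_) measurableSet_Iio
    simp [indicator_of_mem hx]
  · refine ((integrableOn_Ici_iff_integrableOn_Ioi).2 h₂).congr_fun (fun x hx => ?_)
      measurableSet_Ici
    simp [(mem_Ici.1 hx).not_gt]

lemma neg_setIntegral_Iio_add_setIntegral_Ioi {h : ℝ → ℝ}
    (h₁ : IntegrableOn (fun x => 1 - h x) (Iio 0)) (h₂ : IntegrableOn h (Ioi 0)) :
    -(∫ x in Iio 0, (1 - h x)) + ∫ x in Ioi 0, h x = choquetIntegral h := by
  have hint := integrable_sub_indicator_Iio_zero h₁ h₂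
  rw [choquetIntegral, ← intervalIntegral.integral_Iio_add_Ici hint.integrableOn hint.integrableOn,
    integral_Ici_eq_integral_Ioi, ← integral_neg]
  congr 1
  · refine setIntegral_congr_fun measurableSet_Iio (fun x hx => ?_)
    simp [indicator_of_mem hx]
  · refine setIntegral_congr_fun measurableSet_Ioi (fun x hx => ?_)
    simp [(mem_Ioi.1 hx).not_gt]

lemma choquetIntegral_comp_div (h : ℝ → ℝ) {c : ℝ} (hc : 0 < c) :
    choquetIntegral (fun x => h (x / c)) = c * choquetIntegral h := by
  have hind (x : ℝ) : (Iio (0 : ℝ)).indicator (1 : ℝ → ℝ) x = (Iio 0).indicator 1 (x / c) := by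
    simp [indicator_apply, div_neg_iff, hc, hc.not_gt]
  have hdiv := Measure.integral_comp_div (fun y => h y - (Iio 0).indicator 1 y) c
  rw [abs_of_pos hc, smul_eq_mul] at hdiv
  rw [choquetIntegral, choquetIntegral, ← hdiv]
  congr 1 with x
  rw [hind x]

lemma choquetIntegral_one_sub_comp_neg (h : ℝ → ℝ) :
    choquetIntegral (fun x => 1 - h (-x)) = -choquetIntegral h := by
  rw [choquetIntegral, ← integral_neg_eq_self, choquetIntegral, ← integral_neg]
  refine integral_congr_ae ((Measure.ae_ne volume 0).mono fun x hx => ?_)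
  rcases hx.lt_or_gt with hx | hx <;> simp [hx, hx.not_gt]

lemma choquetIntegral_comp_sub {h : ℝ → ℝ} (a : ℝ)
    (hint : Integrable (fun x => h (x - a) - (Iio (0 : ℝ)).indicator 1 x)) :
    choquetIntegral (fun x => h (x - a)) = choquetIntegral h + a := by
  have hshift (x : ℝ) : h (x - a) - (Iio (0 : ℝ)).indicator 1 (x - a) =
      (h (x - a) - (Iio (0 : ℝ)).indicator 1 x) -
        ((Iio a).indicator 1 x - (Iio (0 : ℝ)).indicator 1 x) := by
    simp only [indicator_apply, mem_Iio, sub_neg, Pi.one_apply]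
    ring
  have htranslate : choquetIntegral h = ∫ x, (h (x - a) - (Iio (0 : ℝ)).indicator 1 (x - a)) :=
    (integral_sub_right_eq_self _ a).symm
  rw [htranslate]
  simp only [hshift]
  rw [integral_sub hint (integrable_indicator_Iio_sub_indicator_Iio a 0),
    integral_indicator_Iio_sub_indicator_Iio, choquetIntegral]
  ring

end ChoquetIntegral

section DistortionRiskMeasure

variable {P : Measure Ω} {g : ℝ → ℝ} {X : Ω → ℝ}

lemma rho_eq_choquetIntegral (hfin : RhoFinite P g X) :
    rho P g X = choquetIntegral (fun x => g (rvSurv P X x)) :=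
  neg_setIntegral_Iio_add_setIntegral_Ioi hfin.1 hfin.2

lemma rho_eq_of_rvSurv_eq {h : ℝ → ℝ} {μ σ : ℝ} (hσ : 0 < σ)
    (hsurv : ∀ x, g (rvSurv P X x) = h ((x - μ) / σ)) (hfin : RhoFinite P g X) :
    rho P g X = μ + σ * choquetIntegral h := by
  have hint := integrable_sub_indicator_Iio_zero hfin.1 hfin.2
  simp only [hsurv] at hint
  rw [rho_eq_choquetIntegral hfin]
  simp only [hsurv]
  rw [choquetIntegral_comp_sub (h := fun y => h (y / σ)) μ hint, choquetIntegral_comp_div h hσ]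
  ring

end DistortionRiskMeasure

section StandardNormal

lemma continuous_cdf (μ : Measure ℝ) [IsProbabilityMeasure μ] [NullSingletonClass μ] :
    Continuous (cdf μ) := by
  refine continuous_iff_continuousAt.2 fun x => ?_
  rw [(monotone_cdf μ).continuousAt_iff_leftLim_eq_rightLim, StieltjesFunction.rightLim_eq]
  have h := (cdf μ).measure_singleton x
  rw [measure_cdf, measure_singleton, eq_comm, ENNReal.ofReal_eq_zero, sub_nonpos] at h
  exact le_antisymm ((monotone_cdf μ).leftLim_le le_rfl) h

lemma strictMono_cdf (μ : Measure ℝ) [IsProbabilityMeasure μ] (h : volume ≪ μ) :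
    StrictMono (cdf μ) := by
  intro x y hxy
  by_contra hle
  have hzero : μ (Ioc x y) = 0 := by
    rw [← measure_cdf μ, StieltjesFunction.measure_Ioc, ENNReal.ofReal_eq_zero, sub_nonpos]
    exact not_lt.1 hle
  exact hxy.not_ge (by simpa using h hzero)

lemma stdNormCdf_eq_cdf : stdNormCdf = cdf (gaussianReal 0 1) := by
  funext x
  rw [cdf_eq_real]
  rfl

lemma continuous_stdNormCdf : Continuous stdNormCdf := by
  have := nullSingletonClass_gaussianReal (μ := 0) one_ne_zero
  rw [stdNormCdf_eq_cdf]
  exact continuous_cdf _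

lemma strictMono_stdNormCdf : StrictMono stdNormCdf := by
  rw [stdNormCdf_eq_cdf]
  exact strictMono_cdf _ (gaussianReal_absolutelyContinuous' 0 one_ne_zero)

lemma stdNormCdf_neg (x : ℝ) : stdNormCdf (-x) = 1 - stdNormCdf x := by
  have := nullSingletonClass_gaussianReal (μ := 0) one_ne_zero
  have hsymm : (gaussianReal 0 1).map (fun y => -y) = gaussianReal 0 1 := by
    simpa using gaussianReal_map_neg (μ := 0) (v := 1)
  have hpre : (fun y : ℝ => -y) ⁻¹' Iic (-x) = Ici x := by
    ext y
    simp
  rw [stdNormCdf, ← hsymm, Measure.map_apply measurable_neg measurableSet_Iic, hpre,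
    ← measure_congr Ioi_ae_eq_Ici, ← compl_Iic, prob_compl_eq_one_sub measurableSet_Iic,
    ENNReal.toReal_sub_of_le prob_le_one ENNReal.one_ne_top]
  rfl

lemma exists_stdNormCdf_eq {p : ℝ} (hp : p ∈ Ioo 0 1) : ∃ a, stdNormCdf a = p := by
  rw [stdNormCdf_eq_cdf]
  refine mem_range_of_exists_le_of_exists_ge (stdNormCdf_eq_cdf ▸ continuous_stdNormCdf) ?_ ?_
  · exact ((tendsto_cdf_atBot _).eventually (ge_mem_nhds hp.1)).exists
  · exact ((tendsto_cdf_atTop _).eventually (le_mem_nhds hp.2)).exists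

lemma stdNormCdf_lt_one (x : ℝ) : stdNormCdf x < 1 :=
  (strictMono_stdNormCdf (lt_add_one x)).trans_le (stdNormCdf_eq_cdf ▸ cdf_le_one _ _)

lemma stdNormInv_stdNormCdf (a : ℝ) : stdNormInv (stdNormCdf a) = a := by
  simp only [stdNormInv, strictMono_stdNormCdf.le_iff_le]
  exact csInf_Ici

lemma stdNormInv_le_iff {p : ℝ} (hp : p ∈ Ioo 0 1) (x : ℝ) :
    stdNormInv p ≤ x ↔ p ≤ stdNormCdf x := by
  obtain ⟨a, rfl⟩ := exists_stdNormCdf_eq hp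
  rw [stdNormInv_stdNormCdf, strictMono_stdNormCdf.le_iff_le]

lemma stdNormInv_one_sub {p : ℝ} (hp : p ∈ Ioo 0 1) : stdNormInv (1 - p) = -stdNormInv p := by
  obtain ⟨a, rfl⟩ := exists_stdNormCdf_eq hp
  rw [← stdNormCdf_neg, stdNormInv_stdNormCdf, stdNormInv_stdNormCdf]

lemma monotoneOn_stdNormInv : MonotoneOn stdNormInv (Ioo 0 1) := by
  intro p hp q hq hpq
  obtain ⟨b, rfl⟩ := exists_stdNormCdf_eq hq
  rw [stdNormInv_le_iff hp, stdNormInv_stdNormCdf]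
  exact hpq

lemma volume_restrict_Icc_eq_restrict_Ioo :
    volume.restrict (Icc (0 : ℝ) 1) = volume.restrict (Ioo 0 1) :=
  Measure.restrict_congr_set Ioo_ae_eq_Icc |>.symm

lemma aemeasurable_stdNormInv : AEMeasurable stdNormInv (volume.restrict (Icc 0 1)) := by
  rw [volume_restrict_Icc_eq_restrict_Ioo]
  exact aemeasurable_restrict_of_monotoneOn measurableSet_Ioo monotoneOn_stdNormInv

lemma map_stdNormInv_volume_restrict_Icc :
    (volume.restrict (Icc 0 1)).map stdNormInv = gaussianReal 0 1 := by
  refine Measure.ext_of_Iic _ _ fun t => ?_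
  have hpre : stdNormInv ⁻¹' Iic t ∩ Ioo 0 1 = Ioc 0 (stdNormCdf t) := by
    ext p
    constructor
    · rintro ⟨hpt, hp⟩
      exact ⟨hp.1, (stdNormInv_le_iff hp t).1 hpt⟩
    · rintro ⟨hp0, hpt⟩
      have hp : p ∈ Ioo 0 1 := ⟨hp0, hpt.trans_lt (stdNormCdf_lt_one t)⟩
      exact ⟨(stdNormInv_le_iff hp t).2 hpt, hp⟩
  rw [Measure.map_apply_of_aemeasurable aemeasurable_stdNormInv measurableSet_Iic,
    volume_restrict_Icc_eq_restrict_Ioo, Measure.restrict_apply' measurableSet_Ioo, hpre,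
    Real.volume_Ioc, sub_zero, stdNormCdf, ENNReal.ofReal_toReal (measure_ne_top _ _)]

end StandardNormal

section NormalRV

variable {P : Measure Ω} {X : Ω → ℝ} {μ σ : ℝ}

lemma gaussianReal_map_mul_add (σ μ : ℝ) :
    (gaussianReal 0 1).map (fun x => σ * x + μ) = gaussianReal μ ⟨σ ^ 2, sq_nonneg σ⟩ := by
  rw [show (fun x => σ * x + μ) = (· + μ) ∘ (σ * ·) from rfl,
    ← Measure.map_map (measurable_add_const μ) (measurable_const_mul σ), gaussianReal_map_const_mul,
    gaussianReal_map_add_const]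
  congr 1
  · ring
  · exact mul_one _

lemma rvCdf_of_map_eq_gaussianReal (hX : Measurable X)
    (hmap : P.map X = gaussianReal μ ⟨σ ^ 2, sq_nonneg σ⟩) (hσ : 0 < σ) (x : ℝ) :
    rvCdf P X x = stdNormCdf ((x - μ) / σ) := by
  have hpre : (fun y => σ * y + μ) ⁻¹' Iic x = Iic ((x - μ) / σ) := by
    ext y
    simp [le_div_iff₀ hσ, mul_comm, le_sub_iff_add_le]
  change (P (X ⁻¹' Iic x)).toReal = _
  rw [← Measure.map_apply hX measurableSet_Iic, hmap, ← gaussianReal_map_mul_add,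
    Measure.map_apply (by fun_prop) measurableSet_Iic, hpre]
  rfl

lemma rvSurv_eq_one_sub_rvCdf [IsProbabilityMeasure P] (hX : Measurable X) (x : ℝ) :
    rvSurv P X x = 1 - rvCdf P X x := by
  have hcompl : {ω | x < X ω} = {ω | X ω ≤ x}ᶜ := by
    ext ω
    simp
  rw [rvSurv, rvCdf, hcompl, prob_compl_eq_one_sub (measurableSet_le hX measurable_const),
    ENNReal.toReal_sub_of_le prob_le_one ENNReal.one_ne_top, ENNReal.toReal_one]

lemma leftInv_rvCdf_of_map_eq_gaussianReal (hX : Measurable X)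
    (hmap : P.map X = gaussianReal μ ⟨σ ^ 2, sq_nonneg σ⟩) (hσ : 0 < σ) {p : ℝ}
    (hp : p ∈ Ioo 0 1) : leftInv (rvCdf P X) p = μ + σ * stdNormInv p := by
  have hset : {x | p ≤ rvCdf P X x} = Ici (μ + σ * stdNormInv p) := by
    ext x
    simp only [mem_ofPred_eq, mem_Ici, rvCdf_of_map_eq_gaussianReal hX hmap hσ,
      ← stdNormInv_le_iff hp, le_div_iff₀ hσ]
    constructor <;> intro h <;> linarith
  rw [leftInv, hset, csInf_Ici]

lemma rvSurv_of_map_eq_dirac (hX : Measurable X) (hmap : P.map X = Measure.dirac μ) (x : ℝ) :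
    rvSurv P X x = (Iio (0 : ℝ)).indicator 1 (x - μ) := by
  change (P (X ⁻¹' Ioi x)).toReal = _
  rw [← Measure.map_apply hX measurableSet_Ioi, hmap, Measure.dirac_apply' _ measurableSet_Ioi]
  by_cases hx : x < μ <;> simp [hx]

end NormalRV

section NormalRho

variable {P : Measure Ω} {g : ℝ → ℝ} {X : Ω → ℝ} {μ σ : ℝ}

def stdNormRho (g : ℝ → ℝ) : ℝ := choquetIntegral (fun y => g (1 - stdNormCdf y))

lemma stdNormRho_dualDistortion (g : ℝ → ℝ) : stdNormRho (dualDistortion g) = -stdNormRho g := by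
  rw [stdNormRho, stdNormRho, ← choquetIntegral_one_sub_comp_neg]
  simp only [dualDistortion, stdNormCdf_neg, sub_sub_cancel]

lemma rho_of_map_eq_dirac (hX : Measurable X) (hmap : P.map X = Measure.dirac μ) (hg₀ : g 0 = 0)
    (hg₁ : g 1 = 1) (hfin : RhoFinite P g X) : rho P g X = μ := by
  have hsurv (x : ℝ) : g (rvSurv P X x) = (Iio (0 : ℝ)).indicator 1 ((x - μ) / 1) := by
    rw [rvSurv_of_map_eq_dirac hX hmap, div_one]
    by_cases hx : x - μ < 0 <;> simp [hx, hg₀, hg₁]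
  rw [rho_eq_of_rvSurv_eq one_pos hsurv hfin, choquetIntegral]
  simp

lemma rho_of_map_eq_gaussianReal [IsProbabilityMeasure P] (hX : Measurable X)
    (hmap : P.map X = gaussianReal μ ⟨σ ^ 2, sq_nonneg σ⟩) (hg₀ : g 0 = 0) (hg₁ : g 1 = 1)
    (hfin : RhoFinite P g X) : rho P g X = μ + |σ| * stdNormRho g := by
  rcases eq_or_ne σ 0 with rfl | hσ
  · rw [abs_zero, zero_mul, add_zero]
    refine rho_of_map_eq_dirac hX ?_ hg₀ hg₁ hfin
    rw [hmap, ← gaussianReal_zero_var]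
    exact congrArg _ (NNReal.eq (zero_pow two_ne_zero))
  have hmap' : P.map X = gaussianReal μ ⟨|σ| ^ 2, sq_nonneg |σ|⟩ := by
    simp only [hmap, sq_abs]
  have hsurv (x : ℝ) : g (rvSurv P X x) = g (1 - stdNormCdf ((x - μ) / |σ|)) := by
    rw [rvSurv_eq_one_sub_rvCdf hX, rvCdf_of_map_eq_gaussianReal hX hmap' (abs_pos.2 hσ)]
  exact rho_eq_of_rvSurv_eq (abs_pos.2 hσ) hsurv hfin

end NormalRho

section CounterMonotonicSum

variable {P : Measure Ω} {U : Ω → ℝ}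

lemma ae_mem_Ioo_of_isUniform01 (hU : IsUniform01 P U) : ∀ᵐ ω ∂P, U ω ∈ Ioo 0 1 := by
  refine ae_of_ae_map hU.1.aemeasurable ?_
  rw [hU.2, volume_restrict_Icc_eq_restrict_Ioo]
  exact ae_restrict_mem measurableSet_Ioo

lemma aemeasurable_stdNormInv_comp (hU : IsUniform01 P U) :
    AEMeasurable (fun ω => stdNormInv (U ω)) P :=
  (hU.2 ▸ aemeasurable_stdNormInv).comp_aemeasurable hU.1.aemeasurable

lemma map_stdNormInv_comp_eq_gaussianReal (hU : IsUniform01 P U) :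
    P.map (fun ω => stdNormInv (U ω)) = gaussianReal 0 1 := by
  rw [show (fun ω => stdNormInv (U ω)) = stdNormInv ∘ U from rfl,
    ← AEMeasurable.map_map_of_aemeasurable (hU.2 ▸ aemeasurable_stdNormInv) hU.1.aemeasurable,
    hU.2, map_stdNormInv_volume_restrict_Icc]

variable {ι : Type*} [Fintype ι] {p : ι → Prop} [DecidablePred p] {X : ι → Ω → ℝ}
  {μ σ : ι → ℝ}

lemma map_sum_eq_gaussianReal (hσ : ∀ i, 0 < σ i) (hX : ∀ i, IsNormalRV P (X i) (μ i) (σ i))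
    (hU : IsUniform01 P U)
    (hjoint : P.map (fun ω i => X i ω) =
      P.map (fun ω i => if p i then leftInv (rvCdf P (X i)) (U ω)
        else leftInv (rvCdf P (X i)) (1 - U ω))) :
    P.map (fun ω => ∑ i, X i ω) =
      gaussianReal (∑ i, μ i) ⟨(∑ i, if p i then σ i else -σ i) ^ 2, sq_nonneg _⟩ := by
  set w : ι → ℝ := fun i => if p i then σ i else -σ i
  have hZ := aemeasurable_stdNormInv_comp hU
  have hquantile : (fun ω i => if p i then leftInv (rvCdf P (X i)) (U ω)
      else leftInv (rvCdf P (X i)) (1 - U ω)) =ᵐ[P] fun ω i => μ i + w i * stdNormInv (U ω) := by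
    filter_upwards [ae_mem_Ioo_of_isUniform01 hU] with ω hω
    funext i
    have h1U : 1 - U ω ∈ Ioo 0 1 := ⟨by linarith [hω.2], by linarith [hω.1]⟩
    by_cases hi : p i
    · simp [w, hi, leftInv_rvCdf_of_map_eq_gaussianReal (hX i).1 (hX i).2 (hσ i) hω]
    · simp [w, hi, leftInv_rvCdf_of_map_eq_gaussianReal (hX i).1 (hX i).2 (hσ i) h1U,
        stdNormInv_one_sub hω]
  have hsum (z : ℝ) : ∑ i, (μ i + w i * z) = (∑ i, w i) * z + ∑ i, μ i := by
    rw [Finset.sum_add_distrib, Finset.sum_mul, add_comm]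
  calc P.map (fun ω => ∑ i, X i ω)
      = (P.map fun ω i => X i ω).map fun x => ∑ i, x i := by
        rw [Measure.map_map (by fun_prop) (measurable_pi_lambda _ fun i => (hX i).1)]
        rfl
    _ = (P.map fun ω => stdNormInv (U ω)).map fun z => (∑ i, w i) * z + ∑ i, μ i := by
        rw [hjoint, Measure.map_congr hquantile,
          AEMeasurable.map_map_of_aemeasurable (by fun_prop) (by fun_prop),
          AEMeasurable.map_map_of_aemeasurable (by fun_prop) hZ]
        simp only [Function.comp_def, hsum]
    _ = _ := by rw [map_stdNormInv_comp_eq_gaussianReal hU, gaussianReal_map_mul_add]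

end CounterMonotonicSum

/-- distortion risk measure decomposition for a sum of normal random
variables, the first `m` of which are comonotonic and the last `n` counter-monotonic
to the first block. -/
theorem normal_block_cm_sum_distortion
    (P : Measure Ω) [IsProbabilityMeasure P]
    (m n : ℕ) (X : Fin (m + n) → Ω → ℝ) (μ σ : Fin (m + n) → ℝ)
    (hσ : ∀ i, 0 < σ i) (hX : ∀ i, IsNormalRV P (X i) (μ i) (σ i))
    (U : Ω → ℝ) (hU : IsUniform01 P U)
    (hjoint : Measure.map (fun ω (i : Fin (m + n)) => X i ω) P =
      Measure.map (fun ω (i : Fin (m + n)) =>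
        if (i : ℕ) < m then leftInv (rvCdf P (X i)) (U ω)
        else leftInv (rvCdf P (X i)) (1 - U ω)) P)
    (g : ℝ → ℝ) (hg : IsDistortion g)
    (hfinS : RhoFinite P g (fun ω => ∑ i, X i ω))
    (hfin : ∀ i, RhoFinite P g (X i))
    (hfin' : ∀ i, RhoFinite P (dualDistortion g) (X i)) :
    ((∑ i ∈ Finset.univ.filter (fun i : Fin (m + n) => (i : ℕ) < m), σ i ≥
        ∑ i ∈ Finset.univ.filter (fun i : Fin (m + n) => ¬ (i : ℕ) < m), σ i) →
      rho P g (fun ω => ∑ i, X i ω) =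
        (∑ i ∈ Finset.univ.filter (fun i : Fin (m + n) => (i : ℕ) < m), rho P g (X i)) +
          ∑ i ∈ Finset.univ.filter (fun i : Fin (m + n) => ¬ (i : ℕ) < m),
            rho P (dualDistortion g) (X i)) ∧
    ((∑ i ∈ Finset.univ.filter (fun i : Fin (m + n) => (i : ℕ) < m), σ i <
        ∑ i ∈ Finset.univ.filter (fun i : Fin (m + n) => ¬ (i : ℕ) < m), σ i) →
      rho P g (fun ω => ∑ i, X i ω) =
        (∑ i ∈ Finset.univ.filter (fun i : Fin (m + n) => (i : ℕ) < m),
            rho P (dualDistortion g) (X i)) +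
          ∑ i ∈ Finset.univ.filter (fun i : Fin (m + n) => ¬ (i : ℕ) < m), rho P g (X i)) := by
  have hlaw := map_sum_eq_gaussianReal hσ hX hU hjoint
  have hS := rho_of_map_eq_gaussianReal (Finset.univ.measurable_sum fun i _ => (hX i).1) hlaw
    hg.2.1 hg.2.2.1 hfinS
  have hXi (i : Fin (m + n)) : rho P g (X i) = μ i + σ i * stdNormRho g := by
    rw [rho_of_map_eq_gaussianReal (hX i).1 (hX i).2 hg.2.1 hg.2.2.1 (hfin i), abs_of_pos (hσ i)]
  have hXi' (i : Fin (m + n)) : rho P (dualDistortion g) (X i) = μ i - σ i * stdNormRho g := by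
    rw [rho_of_map_eq_gaussianReal (hX i).1 (hX i).2 (by simp [dualDistortion, hg.2.2.1])
      (by simp [dualDistortion, hg.2.1]) (hfin' i), abs_of_pos (hσ i), stdNormRho_dualDistortion]
    ring
  rw [Finset.sum_ite, Finset.sum_neg_distrib,
    ← Finset.sum_filter_add_sum_filter_not _ (fun i : Fin (m + n) => (i : ℕ) < m) μ] at hS
  simp only [hXi, hXi', Finset.sum_add_distrib, Finset.sum_sub_distrib, ← Finset.sum_mul, hS]
  constructor <;> intro h
  · rw [abs_of_nonneg (by linarith)]
    ring
  · rw [abs_of_neg (by linarith)]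
    ring

end
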